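/- Fix ξ > 0 and define C_ℓ := (ℓ/ξ)/(1 + ℓ/ξ) = ℓ/(ℓ + ξ) for positive integers ℓ. Then for all integers 1 ≤ i ≤ j, the product ∏_{ℓ=i}^{j} C_ℓ ≤ ((i + ξ)/(j + 1 + ξ))^ξ. -/

import Mathlib

/-!
Put `g ℓ := (ℓ + ξ) ^ ξ`. Each factor satisfies `ℓ / (ℓ + ξ) ≤ g ℓ / g (ℓ + 1)`: after taking
logarithms this is `ξ log (1 + 1/(ℓ + ξ)) ≤ log (1 + ξ/ℓ)`, and both sides are separated by
`ξ / (ℓ + ξ)` by the two bounds `1 - 1/y ≤ log y ≤ y - 1`. The product then telescopes to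
`g i / g (j + 1)`.
-/

open Finset Real

theorem Finset.prod_Ico_mul_le_of_mul_le {R : Type*} [CommSemiring R] [PartialOrder R]
    [IsOrderedRing R] {a g : ℕ → R} (ha : ∀ ℓ, 0 ≤ a ℓ) (hstep : ∀ ℓ, a ℓ * g (ℓ + 1) ≤ g ℓ)
    {m n : ℕ} (hmn : m ≤ n) : (∏ ℓ ∈ Ico m n, a ℓ) * g n ≤ g m := by
  induction n, hmn using Nat.le_induction with
  | base => simp
  | succ n hmn ih =>
    calc (∏ ℓ ∈ Ico m (n + 1), a ℓ) * g (n + 1)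
        = (∏ ℓ ∈ Ico m n, a ℓ) * (a n * g (n + 1)) := by rw [prod_Ico_succ_top hmn, mul_assoc]
      _ ≤ (∏ ℓ ∈ Ico m n, a ℓ) * g n :=
        mul_le_mul_of_nonneg_left (hstep n) (prod_nonneg fun ℓ _ ↦ ha ℓ)
      _ ≤ g m := ih

namespace Real

theorem rpow_add_one_div_le {x ξ : ℝ} (hx : 0 < x) (hξ : 0 < ξ) :
    ((x + 1 + ξ) / (x + ξ)) ^ ξ ≤ (x + ξ) / x := by
  rw [rpow_le_iff_le_log (by positivity) (by positivity)]
  have hupper : log ((x + 1 + ξ) / (x + ξ)) ≤ 1 / (x + ξ) := by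
    convert log_le_sub_one_of_pos (show 0 < (x + 1 + ξ) / (x + ξ) by positivity) using 1
    field_simp
    ring
  have hlower : ξ / (x + ξ) ≤ log ((x + ξ) / x) := by
    convert one_sub_inv_le_log_of_pos (show 0 < (x + ξ) / x by positivity) using 1
    field_simp
    ring
  calc ξ * log ((x + 1 + ξ) / (x + ξ)) ≤ ξ * (1 / (x + ξ)) :=
        mul_le_mul_of_nonneg_left hupper hξ.le
    _ = ξ / (x + ξ) := mul_one_div ξ (x + ξ)
    _ ≤ log ((x + ξ) / x) := hlower

theorem div_add_mul_rpow_le {x ξ : ℝ} (hx : 0 ≤ x) (hξ : 0 < ξ) :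
    x / (x + ξ) * (x + 1 + ξ) ^ ξ ≤ (x + ξ) ^ ξ := by
  rcases hx.eq_or_lt with rfl | hx
  · simpa using rpow_nonneg hξ.le ξ
  calc x / (x + ξ) * (x + 1 + ξ) ^ ξ
      = x / (x + ξ) * (x + ξ) ^ ξ * ((x + 1 + ξ) / (x + ξ)) ^ ξ := by
        rw [div_rpow (by positivity) (by positivity)]
        field_simp
    _ ≤ x / (x + ξ) * (x + ξ) ^ ξ * ((x + ξ) / x) :=
        mul_le_mul_of_nonneg_left (rpow_add_one_div_le hx hξ) (by positivity)
    _ = (x + ξ) ^ ξ := by field_simp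

end Real

theorem stmt_9_general (ξ : ℝ) (hξ : 0 < ξ) (i j : ℕ) (hij : i ≤ j) :
    (∏ ℓ ∈ Finset.Icc i j, (ℓ : ℝ) / (ℓ + ξ))
      ≤ (((i : ℝ) + ξ) / ((j : ℝ) + 1 + ξ)) ^ ξ := by
  have hstep (ℓ : ℕ) : (ℓ : ℝ) / (ℓ + ξ) * (((ℓ + 1 : ℕ) : ℝ) + ξ) ^ ξ ≤ ((ℓ : ℝ) + ξ) ^ ξ := by
    simpa using div_add_mul_rpow_le (Nat.cast_nonneg ℓ) hξ
  have htelescope := prod_Ico_mul_le_of_mul_le (a := fun ℓ : ℕ ↦ (ℓ : ℝ) / (ℓ + ξ))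
    (g := fun ℓ : ℕ ↦ ((ℓ : ℝ) + ξ) ^ ξ) (fun ℓ ↦ by positivity) hstep
    (show i ≤ j + 1 by omega)
  rw [Ico_add_one_right_eq_Icc] at htelescope
  rw [div_rpow (by positivity) (by positivity), le_div_iff₀ (by positivity)]
  simpa using htelescope

theorem stmt_9 (ξ : ℝ) (hξ : 0 < ξ) (i j : ℕ) (hi : 1 ≤ i) (hij : i ≤ j) :
    (∏ ℓ ∈ Finset.Icc i j, (ℓ : ℝ) / (ℓ + ξ))
      ≤ (((i : ℝ) + ξ) / ((j : ℝ) + 1 + ξ)) ^ ξ :=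
  stmt_9_general ξ hξ i j hij
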